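/- arXiv:2502.16512 — 7 statements merged into one kernel-verified Lean document; each statement's English description precedes it below -/
import Mathlib

section
/- Let E be a nonempty finite index set and let (L_e)_{e∈E} be a family of positive real numbers that is linearly independent over ℚ. For each e ∈ E let (γ_{e,ℓ})_{ℓ∈ℕ} be a sequence of real numbers such that γ_{e,ℓ} converges to some γ_e in the extended real line [−∞,∞] and γ_{e,ℓ}/ℓ → 0 as ℓ → ∞. Then there exists a sequence (λ_ℓ)_{ℓ∈ℕ} in (0,∞) with λ_ℓ → ∞ as ℓ → ∞ such that for every e ∈ E one has ℓ·sin(√(λ_ℓ)·L_e) → γ_e in [−∞,∞] and cos(√(λ_ℓ)·L_e) → 1 as ℓ → ∞. -/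
/-!
The heart of the matter is Kronecker's theorem for linear flows: if the `L e` are linearly
independent over `ℤ`, then for every phase `θ` there are arbitrarily large `t` with
`t * L e ≈ θ e` modulo `2π` for all `e` simultaneously. To prove it, average the kernel
`F t = ∏ e, ((1 + cos (t * L e - θ e)) / 2) ^ N`. It is a trigonometric polynomial whose
frequencies `∑ e, k e * L e` (with `|k e| ≤ N`) vanish only for `k = 0`, so its mean over
`[0, T]` tends to the constant term `(C(2N, N) / 4 ^ N) ^ |E| ≥ (2N) ^ (-|E|)`. As soon as one
factor is at most `1 - ε / 2`, `F t ≤ (1 - ε / 2) ^ N`, which is smaller for large `N`; hence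
some large `t` has every factor close to `1`.

The theorem then follows by aiming at `θ e = arcsin (γ e ℓ / ℓ)` with an error `o(1 / ℓ)` at
some time `t ℓ ≥ ℓ + 1`, and putting `λ ℓ = (t ℓ) ^ 2`.
-/

open Filter Topology
open Finset Complex

lemma one_add_cos_div_two_pow (N : ℕ) (x : ℝ) :
    ((((1 + Real.cos x) / 2) ^ N : ℝ) : ℂ) = (∑ j ∈ range (2 * N + 1),
      ((2 * N).choose j : ℂ) * exp ((((j : ℝ) - N) * x : ℝ) * I)) / 4 ^ N := by
  set w := exp (x * I)
  have hw : w ≠ 0 := exp_ne_zero _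
  have hterm (j : ℕ) : exp ((((j : ℝ) - N) * x : ℝ) * I) = w ^ j / w ^ N := by
    rw [← exp_nat_mul, ← exp_nat_mul, ← exp_sub]
    push_cast
    ring_nf
  have hcos : (2 + 2 * Real.cos x : ℂ) = (w + 1) ^ 2 / w := by
    rw [ofReal_cos, two_cos, neg_mul, exp_neg]
    field_simp
    ring
  simp only [hterm, mul_div_assoc', ← sum_div]
  calc ((((1 + Real.cos x) / 2) ^ N : ℝ) : ℂ) = ((w + 1) ^ 2 / w) ^ N / 4 ^ N := by
        rw [← hcos, ← div_pow]
        push_cast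
        ring
    _ = _ := by
        rw [div_pow, ← pow_mul, add_pow]
        simp only [one_pow, mul_one, mul_comm]

lemma norm_integral_exp_mul_I_le {a : ℝ} (ha : a ≠ 0) (T : ℝ) :
    ‖∫ t in (0 : ℝ)..T, exp (a * I * t)‖ ≤ 2 / |a| := by
  have haI : (a : ℂ) * I ≠ 0 := mul_ne_zero (ofReal_ne_zero.mpr ha) I_ne_zero
  have hunit (s : ℝ) : ‖exp (a * I * s)‖ = 1 := by
    rw [mul_right_comm, ← ofReal_mul]
    exact norm_exp_ofReal_mul_I _
  rw [integral_exp_mul_complex haI, norm_div, norm_mul, norm_I, norm_real, Real.norm_eq_abs,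
    mul_one]
  gcongr
  calc _ ≤ ‖exp (a * I * T)‖ + ‖exp (a * I * (0 : ℝ))‖ := norm_sub_le _ _
    _ = 2 := by rw [hunit, hunit]; norm_num

lemma norm_integral_sum_exp_sub_le {ι : Type*} [DecidableEq ι] (S : Finset ι) (c : ι → ℂ)
    (a : ι → ℝ) {j₀ : ι} (hj₀ : j₀ ∈ S) (ha₀ : a j₀ = 0) (ha : ∀ j ∈ S.erase j₀, a j ≠ 0) (T : ℝ) :
    ‖(∫ t in (0 : ℝ)..T, ∑ j ∈ S, c j * exp (a j * I * t)) - T * c j₀‖ ≤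
      ∑ j ∈ S.erase j₀, ‖c j‖ * (2 / |a j|) := by
  rw [intervalIntegral.integral_finsetSum fun j _ =>
    (by fun_prop : Continuous _).intervalIntegrable _ _, ← add_sum_erase _ _ hj₀]
  simp only [intervalIntegral.integral_const_mul, ha₀, ofReal_zero, zero_mul, exp_zero,
    intervalIntegral.integral_const, sub_zero, real_smul, mul_one, mul_comm (T : ℂ),
    add_sub_cancel_left]
  refine (norm_sum_le _ _).trans (sum_le_sum fun j hj => ?_)
  rw [norm_mul]
  gcongr
  exact norm_integral_exp_mul_I_le (ha j hj) T

lemma exists_ge_le_of_integral_ge {F : ℝ → ℝ} (hF : Continuous F) {b c C : ℝ} (hbc : b < c)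
    (hint : ∀ T ≥ 0, c * T - C ≤ ∫ t in (0 : ℝ)..T, F t) (T : ℝ) : ∃ t ≥ T, b ≤ F t := by
  by_contra! hlt
  set T₀ := max T 0
  obtain ⟨T₁, hT₁, hT₀₁⟩ := (((tendsto_id.const_mul_atTop (sub_pos.mpr hbc)).eventually_gt_atTop
    (C + (∫ t in (0 : ℝ)..T₀, F t) - b * T₀)).and (eventually_ge_atTop T₀)).exists
  have htail : ∫ t in T₀..T₁, F t ≤ b * (T₁ - T₀) := by
    refine (intervalIntegral.integral_mono_on hT₀₁ (hF.intervalIntegrable _ _)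
      intervalIntegrable_const fun t ht => (hlt t ((le_max_left _ _).trans ht.1)).le).trans ?_
    simp [mul_comm]
  have hsplit := intervalIntegral.integral_add_adjacent_intervals (μ := MeasureTheory.volume)
    (hF.intervalIntegrable 0 T₀) (hF.intervalIntegrable T₀ T₁)
  have := hint T₁ ((le_max_right _ _).trans hT₀₁)
  simp only [id] at hT₁
  linarith

section KroneckerKernel

variable {E : Type*} [Fintype E]

noncomputable def kroneckerKernel (L θ : E → ℝ) (N : ℕ) (t : ℝ) : ℝ :=
  ∏ e, ((1 + Real.cos (t * L e - θ e)) / 2) ^ N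

lemma continuous_kroneckerKernel (L θ : E → ℝ) (N : ℕ) : Continuous (kroneckerKernel L θ N) := by
  unfold kroneckerKernel
  fun_prop

lemma kroneckerKernel_le (L θ : E → ℝ) (N : ℕ) (t : ℝ) (e : E) :
    kroneckerKernel L θ N t ≤ ((1 + Real.cos (t * L e - θ e)) / 2) ^ N := by
  classical
  have h0 (x : ℝ) : 0 ≤ ((1 + Real.cos x) / 2) ^ N :=
    pow_nonneg (by linarith [Real.neg_one_le_cos x]) _
  have h1 (x : ℝ) : ((1 + Real.cos x) / 2) ^ N ≤ 1 :=
    pow_le_one₀ (by linarith [Real.neg_one_le_cos x]) (by linarith [Real.cos_le_one x])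
  rw [kroneckerKernel, ← mul_prod_erase univ _ (mem_univ e)]
  exact mul_le_of_le_one_right (h0 _) (prod_le_one (fun _ _ => h0 _) fun _ _ => h1 _)

lemma kroneckerKernel_eq_sum [DecidableEq E] (L θ : E → ℝ) (N : ℕ) (t : ℝ) :
    (kroneckerKernel L θ N t : ℂ) = ∑ j ∈ Fintype.piFinset fun _ : E => range (2 * N + 1),
      (∏ e, (2 * N).choose (j e) * exp (-(((j e : ℝ) - N) * θ e : ℝ) * I) / 4 ^ N) *
        exp ((∑ e, ((j e : ℝ) - N) * L e : ℝ) * I * t) := by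
  simp only [kroneckerKernel, ofReal_prod, one_add_cos_div_two_pow, sum_div]
  rw [prod_univ_sum]
  refine sum_congr rfl fun j _ => ?_
  rw [ofReal_sum, sum_mul, sum_mul, exp_sum, ← prod_mul_distrib]
  refine prod_congr rfl fun e _ => ?_
  have hsplit : exp ((((j e : ℝ) - N) * (t * L e - θ e) : ℝ) * I) =
      exp (-(((j e : ℝ) - N) * θ e : ℝ) * I) * exp ((((j e : ℝ) - N) * L e : ℝ) * I * t) := by
    rw [← exp_add]
    push_cast
    ring_nf
  rw [hsplit]
  ring

lemma exists_integral_kroneckerKernel_ge {L : E → ℝ} (hL : LinearIndependent ℤ L)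
    (θ : E → ℝ) (N : ℕ) : ∃ C, ∀ T, ((2 * N).choose N / 4 ^ N : ℝ) ^ Fintype.card E * T - C ≤
      ∫ t in (0 : ℝ)..T, kroneckerKernel L θ N t := by
  classical
  set S := Fintype.piFinset fun _ : E => range (2 * N + 1)
  set c : (E → ℕ) → ℂ := fun j =>
    ∏ e, (2 * N).choose (j e) * exp (-(((j e : ℝ) - N) * θ e : ℝ) * I) / 4 ^ N
  set a : (E → ℕ) → ℝ := fun j => ∑ e, ((j e : ℝ) - N) * L e
  have hD : (fun _ => N) ∈ S := Fintype.mem_piFinset.mpr fun _ => mem_range.mpr (by omega)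
  have ha₀ : a (fun _ => N) = 0 := by simp [a]
  have ha : ∀ j ∈ S.erase (fun _ => N), a j ≠ 0 := by
    intro j hj hzero
    refine ne_of_mem_erase hj (funext fun e => ?_)
    have := Fintype.linearIndependent_iff.mp hL (fun e => (j e : ℤ) - N)
      (by simpa [a] using hzero) e
    omega
  have hc : c (fun _ => N) = (((2 * N).choose N / 4 ^ N : ℝ) ^ Fintype.card E : ℝ) := by
    simp [c, prod_const, div_pow]
  refine ⟨∑ j ∈ S.erase (fun _ => N), ‖c j‖ * (2 / |a j|), fun T => ?_⟩
  have key := norm_integral_sum_exp_sub_le S c a hD ha₀ ha T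
  have hF : (fun t : ℝ => ∑ j ∈ S, c j * exp (a j * I * t)) =
      fun t => (kroneckerKernel L θ N t : ℂ) :=
    funext fun t => (kroneckerKernel_eq_sum L θ N t).symm
  rw [hF, intervalIntegral.integral_ofReal, hc, ← ofReal_mul, ← ofReal_sub, norm_real,
    Real.norm_eq_abs] at key
  linarith [(abs_le.mp key).1]

end KroneckerKernel

lemma inv_two_mul_le_choose_div_four_pow {N : ℕ} (hN : 1 ≤ N) :
    (2 * N : ℝ)⁻¹ ≤ (2 * N).choose N / 4 ^ N := by
  have h := Nat.four_pow_le_two_mul_self_mul_centralBinom N hN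
  rw [Nat.centralBinom_eq_two_mul_choose] at h
  rw [le_div_iff₀ (by positivity), inv_mul_le_iff₀ (by positivity)]
  exact_mod_cast h

lemma exists_pow_lt_choose_div_four_pow_pow {r : ℝ} (hr₀ : 0 ≤ r) (hr₁ : r < 1) (m : ℕ) :
    ∃ N : ℕ, r ^ N < ((2 * N).choose N / 4 ^ N : ℝ) ^ m / 2 := by
  obtain ⟨N, hlt, hN⟩ := (((tendsto_pow_const_mul_const_pow_of_lt_one m hr₀ hr₁).eventually
    (gt_mem_nhds (by positivity : (0 : ℝ) < 2⁻¹ ^ m / 2))).and (eventually_ge_atTop 1)).exists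
  have hNpos : (0 : ℝ) < N := by exact_mod_cast hN
  refine ⟨N, ?_⟩
  calc r ^ N = (N ^ m * r ^ N) / N ^ m := by field_simp
    _ < (2⁻¹ ^ m / 2) / N ^ m := by gcongr
    _ = (2 * N : ℝ)⁻¹ ^ m / 2 := by rw [mul_inv, mul_pow, inv_pow (N : ℝ)]; ring
    _ ≤ ((2 * N).choose N / 4 ^ N : ℝ) ^ m / 2 := by
      gcongr
      exact inv_two_mul_le_choose_div_four_pow hN

theorem exists_ge_forall_one_sub_cos_lt {E : Type*} [Fintype E] {L : E → ℝ}
    (hL : LinearIndependent ℤ L) (θ : E → ℝ) {ε : ℝ} (hε : 0 < ε) (T : ℝ) :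
    ∃ t ≥ T, ∀ e, 1 - Real.cos (t * L e - θ e) < ε := by
  obtain ⟨N, hN⟩ := exists_pow_lt_choose_div_four_pow_pow (r := 1 - min ε 1 / 2)
    (by linarith [min_le_right ε 1]) (by linarith [lt_min hε one_pos]) (Fintype.card E)
  have hc₀ : 0 < ((2 * N).choose N / 4 ^ N : ℝ) ^ Fintype.card E := by
    have : 0 < (2 * N).choose N := Nat.choose_pos (by omega)
    positivity
  obtain ⟨C, hC⟩ := exists_integral_kroneckerKernel_ge hL θ N
  obtain ⟨t, htT, ht⟩ := exists_ge_le_of_integral_ge (continuous_kroneckerKernel L θ N)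
    (half_lt_self hc₀) (fun T _ => hC T) T
  refine ⟨t, htT, fun e => ?_⟩
  by_contra! hge
  have hfactor : ((1 + Real.cos (t * L e - θ e)) / 2) ^ N ≤ (1 - min ε 1 / 2) ^ N :=
    pow_le_pow_left₀ (by linarith [Real.neg_one_le_cos (t * L e - θ e)])
      (by linarith [min_le_left ε 1]) N
  linarith [kroneckerKernel_le L θ N t e]

lemma sin_sub_sin_sq_add_cos_sub_cos_sq (x y : ℝ) :
    (Real.sin x - Real.sin y) ^ 2 + (Real.cos x - Real.cos y) ^ 2 = 2 * (1 - Real.cos (x - y)) := by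
  rw [Real.cos_sub]
  nlinarith [Real.sin_sq_add_cos_sq x, Real.sin_sq_add_cos_sq y]

theorem exists_ge_forall_abs_sin_sub_lt {E : Type*} [Fintype E] {L : E → ℝ}
    (hL : LinearIndependent ℤ L) (θ : E → ℝ) {δ : ℝ} (hδ : 0 < δ) (T : ℝ) :
    ∃ t ≥ T, ∀ e, |Real.sin (t * L e) - Real.sin (θ e)| < δ ∧
      |Real.cos (t * L e) - Real.cos (θ e)| < δ := by
  obtain ⟨t, htT, ht⟩ := exists_ge_forall_one_sub_cos_lt hL θ (half_pos (pow_pos hδ 2)) T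
  refine ⟨t, htT, fun e => ?_⟩
  have h := sin_sub_sin_sq_add_cos_sub_cos_sq (t * L e) (θ e)
  have := ht e
  exact ⟨abs_lt_of_sq_lt_sq (by nlinarith) hδ.le, abs_lt_of_sq_lt_sq (by nlinarith) hδ.le⟩

lemma EReal.tendsto_coe_of_sub_tendsto_zero {α : Type*} {l : Filter α} {f g : α → ℝ} {G : EReal}
    (hf : Tendsto (fun n => (f n : EReal)) l (𝓝 G)) (hfg : Tendsto (fun n => g n - f n) l (𝓝 0)) :
    Tendsto (fun n => (g n : EReal)) l (𝓝 G) := by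
  have := (EReal.continuousAt_add (p := (G, 0)) (Or.inr EReal.zero_ne_bot)
    (Or.inr EReal.zero_ne_top)).tendsto.comp (hf.prodMk_nhds (EReal.tendsto_coe.mpr hfg))
  convert this using 2 with n
  · rw [Function.comp_apply, ← EReal.coe_add, add_sub_cancel]
  · rw [add_zero]

lemma tendsto_natCast_mul_sub_of_abs_sub_sin_arcsin_le {s γ : ℕ → ℝ}
    (hγ : Tendsto (fun ℓ : ℕ => γ ℓ / ℓ) atTop (𝓝 0))
    (hs : ∀ ℓ : ℕ, |s ℓ - Real.sin (Real.arcsin (γ ℓ / ℓ))| ≤ (1 / ((ℓ : ℝ) + 1)) ^ 2) :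
    Tendsto (fun ℓ : ℕ => ℓ * s ℓ - γ ℓ) atTop (𝓝 0) := by
  refine squeeze_zero_norm' ?_ (tendsto_one_div_add_atTop_nhds_zero_nat (𝕜 := ℝ))
  filter_upwards [hγ.eventually (Icc_mem_nhds (by norm_num : (-1 : ℝ) < 0) one_pos),
    eventually_ne_atTop 0] with ℓ hmem hℓ
  have hsin : Real.sin (Real.arcsin (γ ℓ / ℓ)) * ℓ = γ ℓ := by
    rw [Real.sin_arcsin hmem.1 hmem.2]
    field_simp
  rw [← hsin, mul_comm (Real.sin _), ← mul_sub, norm_mul, Real.norm_natCast, Real.norm_eq_abs]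
  calc (ℓ : ℝ) * |_| ≤ ℓ * (1 / ((ℓ : ℝ) + 1)) ^ 2 := by gcongr; exact hs ℓ
    _ ≤ ((ℓ : ℝ) + 1) * (1 / ((ℓ : ℝ) + 1)) ^ 2 := by gcongr; linarith
    _ = 1 / ((ℓ : ℝ) + 1) := by field_simp

theorem ergodic_lemma_general {E : Type*} [Fintype E]
    (L : E → ℝ)
    (hindep : LinearIndependent ℚ L)
    (γ : E → ℕ → ℝ) (γlim : E → EReal)
    (hγ : ∀ e, Tendsto (fun ℓ : ℕ => ((γ e ℓ : ℝ) : EReal)) atTop (nhds (γlim e)))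
    (hγdiv : ∀ e, Tendsto (fun ℓ : ℕ => γ e ℓ / (ℓ : ℝ)) atTop (nhds 0)) :
    ∃ lam : ℕ → ℝ, (∀ ℓ, 0 < lam ℓ) ∧ Tendsto lam atTop atTop ∧
      ∀ e, Tendsto (fun ℓ : ℕ => (((ℓ : ℝ) * Real.sin (Real.sqrt (lam ℓ) * L e) : ℝ) : EReal))
            atTop (nhds (γlim e)) ∧
        Tendsto (fun ℓ : ℕ => Real.cos (Real.sqrt (lam ℓ) * L e)) atTop (nhds 1) := by
  set δ : ℕ → ℝ := fun ℓ => (1 / ((ℓ : ℝ) + 1)) ^ 2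
  have hδ : Tendsto δ atTop (𝓝 0) := by
    simpa only [zero_pow two_ne_zero] using
      (tendsto_one_div_add_atTop_nhds_zero_nat (𝕜 := ℝ)).pow 2
  choose t htℓ ht using fun ℓ : ℕ => exists_ge_forall_abs_sin_sub_lt (hindep.restrict_scalars' ℤ)
    (fun e => Real.arcsin (γ e ℓ / ℓ)) (δ := δ ℓ) (by positivity) (ℓ + 1)
  have htpos (ℓ : ℕ) : 0 < t ℓ := by linarith [htℓ ℓ, (ℓ.cast_nonneg : (0 : ℝ) ≤ ℓ)]
  have hsqrt (ℓ : ℕ) : Real.sqrt (t ℓ ^ 2) = t ℓ := Real.sqrt_sq (htpos ℓ).le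
  refine ⟨fun ℓ => t ℓ ^ 2, fun ℓ => pow_pos (htpos ℓ) 2, ?_, fun e => ⟨?_, ?_⟩⟩
  · refine (tendsto_pow_atTop two_ne_zero).comp (tendsto_atTop_mono htℓ ?_)
    exact tendsto_natCast_atTop_atTop.atTop_add tendsto_const_nhds
  · simp only [hsqrt]
    exact EReal.tendsto_coe_of_sub_tendsto_zero (hγ e)
      (tendsto_natCast_mul_sub_of_abs_sub_sin_arcsin_le (hγdiv e) fun ℓ => (ht ℓ e).1.le)
  · simp only [hsqrt]
    have hcos : Tendsto (fun ℓ : ℕ => Real.cos (Real.arcsin (γ e ℓ / ℓ))) atTop (𝓝 1) := by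
      simpa [Function.comp_def] using
        ((Real.continuous_cos.comp Real.continuous_arcsin).tendsto 0).comp (hγdiv e)
    have hdiff : Tendsto (fun ℓ => Real.cos (t ℓ * L e) - Real.cos (Real.arcsin (γ e ℓ / ℓ)))
        atTop (𝓝 0) :=
      squeeze_zero_norm (fun ℓ => (ht ℓ e).2.le) hδ
    simpa using hdiff.add hcos

/-- Let `E` be a nonempty finite index set and `(L_e)` a family of positive
reals, linearly independent over `ℚ`. For each `e` let `(γ_{e,ℓ})` be a real sequence converging
in the extended real line to `γlim e` with `γ_{e,ℓ}/ℓ → 0`. Then there is a sequence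
`(λ_ℓ)` in `(0,∞)` with `λ_ℓ → ∞` such that for every `e`,
`ℓ·sin(√λ_ℓ·L_e) → γlim e` in `[−∞,∞]` and `cos(√λ_ℓ·L_e) → 1`. -/
theorem ergodic_lemma {E : Type*} [Fintype E] [Nonempty E]
    (L : E → ℝ) (hLpos : ∀ e, 0 < L e)
    (hindep : LinearIndependent ℚ L)
    (γ : E → ℕ → ℝ) (γlim : E → EReal)
    (hγ : ∀ e, Tendsto (fun ℓ : ℕ => ((γ e ℓ : ℝ) : EReal)) atTop (nhds (γlim e)))
    (hγdiv : ∀ e, Tendsto (fun ℓ : ℕ => γ e ℓ / (ℓ : ℝ)) atTop (nhds 0)) :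
    ∃ lam : ℕ → ℝ, (∀ ℓ, 0 < lam ℓ) ∧ Tendsto lam atTop atTop ∧
      ∀ e, Tendsto (fun ℓ : ℕ => (((ℓ : ℝ) * Real.sin (Real.sqrt (lam ℓ) * L e) : ℝ) : EReal))
            atTop (nhds (γlim e)) ∧
        Tendsto (fun ℓ : ℕ => Real.cos (Real.sqrt (lam ℓ) * L e)) atTop (nhds 1) :=
  ergodic_lemma_general L hindep γ γlim hγ hγdiv
end

section
/- Let G = (V,E) be a finite connected simple graph on the vertex set {1,…,n}, partitioned into V₀ = {1,…,m} (with 1 ≤ m < n) and V₁ = {m+1,…,n}. Let Q ∈ ℂ^{n×n} belong to the class A(G) and have the block form Q = [[A, Bᵀ],[B, C]], where A ∈ ℂ^{m×m} corresponds to the rows and columns indexed by V₀, C ∈ ℂ^{(n−m)×(n−m)} to those indexed by V₁, and B ∈ ℂ^{(n−m)×m}. If C is invertible, then the Schur complement M := A + Bᵀ(−C)⁻¹B belongs to the class A(G₀); that is, M_{rs} = 0 for all distinct r,s ∈ V₀ that are not adjacent in the reduced graph G₀. -/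
/-!
Let `U ⊆ V₁` be the set of vertices reachable from `r` by a walk whose later vertices all lie
in `V₁`. A nonzero `B i r` forces `i ∈ U`, and a nonzero `B j s` forces `j ∉ U`, since otherwise
`s` would be reached from `r` through `V₁`. As `U` is closed under edges inside `V₁`, `C i j = 0`
for `i ∈ U`, `j ∉ U`: `C` is block triangular for the partition `U, V₁ \ U`, hence so is
`(-C)⁻¹`. So every term `B i r (-C)⁻¹ i j B j s` of the correction vanishes, and `A r s = 0`
because `r` and `s` are not adjacent.
-/

open Matrix

/-- `r` and `s` in `V₀ = Fin m` are connected by a path in `G` all of whose intermediate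
vertices lie in `V₁ = Fin p`. -/
def ConnThroughInner {m p : ℕ} (G : SimpleGraph (Fin m ⊕ Fin p)) (r s : Fin m) : Prop :=
  ∃ w : G.Walk (Sum.inl r) (Sum.inl s), w.IsPath ∧
    ∀ v ∈ w.support, v ≠ Sum.inl r → v ≠ Sum.inl s → ∃ i : Fin p, v = Sum.inr i

/-- Adjacency in the reduced graph `G₀` on `V₀ = Fin m`: distinct `r, s` are adjacent iff they
are adjacent in `G` or connected by a path through `V₁`. -/
def ReducedAdj {m p : ℕ} (G : SimpleGraph (Fin m ⊕ Fin p)) (r s : Fin m) : Prop :=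
  r ≠ s ∧ (G.Adj (Sum.inl r) (Sum.inl s) ∨ ConnThroughInner G r s)

namespace Matrix

theorem blockTriangular_mem_iff {ι R : Type*} [Zero R] {M : Matrix ι ι R} {U : Set ι} :
    M.BlockTriangular (· ∈ U) ↔ ∀ i ∈ U, ∀ j ∉ U, M i j = 0 := by
  simp only [BlockTriangular, lt_iff_le_not_ge, le_Prop_eq]
  grind

theorem transpose_mul_mul_apply_eq_zero {ι κ R : Type*} [Fintype ι] [NonUnitalNonAssocSemiring R]
    {B : Matrix ι κ R} {X : Matrix ι ι R} {U : Set ι} {r s : κ}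
    (hX : X.BlockTriangular (· ∈ U)) (hr : ∀ i ∉ U, B i r = 0) (hs : ∀ j ∈ U, B j s = 0) :
    (Bᵀ * X * B) r s = 0 := by
  simp only [mul_apply]
  refine Finset.sum_eq_zero fun j _ => ?_
  by_cases hj : j ∈ U
  · rw [hs j hj, mul_zero]
  · refine mul_eq_zero_of_left (Finset.sum_eq_zero fun i _ => ?_) _
    by_cases hi : i ∈ U
    · rw [blockTriangular_mem_iff.mp hX i hi j hj, mul_zero]
    · rw [transpose_apply, hr i hi, zero_mul]

end Matrix

section InnerReach

variable {α β : Type*} {G : SimpleGraph (α ⊕ β)} {a : α}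

def innerReach (G : SimpleGraph (α ⊕ β)) (a : α) : Set β :=
  {i | ∃ w : G.Walk (.inl a) (.inr i), ∀ v ∈ w.support, v ≠ .inl a → ∃ k, v = .inr k}

theorem mem_innerReach_of_adj {i : β} (h : G.Adj (.inl a) (.inr i)) : i ∈ innerReach G a := by
  refine ⟨.cons h .nil, fun v hv hva => ?_⟩
  simp only [SimpleGraph.Walk.support_cons, SimpleGraph.Walk.support_nil, List.mem_cons,
    List.not_mem_nil, or_false] at hv
  rcases hv with rfl | rfl
  · exact absurd rfl hva
  · exact ⟨i, rfl⟩

theorem mem_innerReach_of_adj_of_mem {i j : β} (hi : i ∈ innerReach G a)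
    (h : G.Adj (.inr i) (.inr j)) : j ∈ innerReach G a := by
  obtain ⟨w, hw⟩ := hi
  refine ⟨w.concat h, fun v hv hva => ?_⟩
  rw [SimpleGraph.Walk.support_concat, List.mem_append, List.mem_singleton] at hv
  exact hv.elim (hw v · hva) fun hv => ⟨j, hv⟩

end InnerReach

theorem connThroughInner_of_mem_innerReach {m p : ℕ} {G : SimpleGraph (Fin m ⊕ Fin p)}
    {r s : Fin m} {i : Fin p} (hi : i ∈ innerReach G r) (h : G.Adj (.inr i) (.inl s)) :
    ConnThroughInner G r s := by
  classical
  obtain ⟨w, hw⟩ := hi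
  refine ⟨(w.concat h).bypass, (w.concat h).bypass_isPath, fun v hv hvr hvs => ?_⟩
  have hv := (w.concat h).support_bypass_subset_support hv
  rw [SimpleGraph.Walk.support_concat, List.mem_append, List.mem_singleton] at hv
  exact hv.elim (hw v · hvr) (absurd · hvs)

theorem schur_complement_in_reduced_class_general {m p : ℕ}
    (G : SimpleGraph (Fin m ⊕ Fin p))
    (Q : Matrix (Fin m ⊕ Fin p) (Fin m ⊕ Fin p) ℂ)
    (hQ : ∀ k j, k ≠ j → ¬ G.Adj k j → Q k j = 0)
    (hC : IsUnit Q.toBlocks₂₂) :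
    ∀ r s : Fin m, r ≠ s → ¬ ReducedAdj G r s →
      (Q.toBlocks₁₁ + (Q.toBlocks₂₁)ᵀ * (-Q.toBlocks₂₂)⁻¹ * Q.toBlocks₂₁) r s = 0 := by
  intro r s hrs hred
  have hA : Q.toBlocks₁₁ r s = 0 :=
    hQ _ _ (by simpa using hrs) fun h => hred ⟨hrs, .inl h⟩
  have hBr : ∀ i ∉ innerReach G r, Q.toBlocks₂₁ i r = 0 := fun i hi =>
    hQ _ _ Sum.inr_ne_inl fun h => hi (mem_innerReach_of_adj h.symm)
  have hBs : ∀ j ∈ innerReach G r, Q.toBlocks₂₁ j s = 0 := fun j hj =>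
    hQ _ _ Sum.inr_ne_inl fun h => hred ⟨hrs, .inr (connThroughInner_of_mem_innerReach hj h)⟩
  have hCU : Q.toBlocks₂₂.BlockTriangular (· ∈ innerReach G r) :=
    blockTriangular_mem_iff.mpr fun i hi j hj =>
      hQ _ _ (by simpa using ne_of_mem_of_not_mem hi hj)
        fun h => hj (mem_innerReach_of_adj_of_mem hi h)
  have := hC.neg.invertible
  rw [Matrix.add_apply, hA, zero_add]
  exact transpose_mul_mul_apply_eq_zero (blockTriangular_inv_of_blockTriangular hCU.neg) hBr hBs

/-- Let `G` be a finite connected simple graph on `V₀ ⊕ V₁` and let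
`Q ∈ ℂ^{n×n}` belong to the class `A(G)`, written in block form `[[A, Bᵀ],[B, C]]`.  If `C` is
invertible, then the Schur complement `M = A + Bᵀ(−C)⁻¹B` belongs to the class `A(G₀)` of the
reduced graph: `M_{rs} = 0` for distinct `r, s ∈ V₀` that are not adjacent in `G₀`. -/
theorem schur_complement_in_reduced_class {m p : ℕ} (hm : 1 ≤ m) (hp : 1 ≤ p)
    (G : SimpleGraph (Fin m ⊕ Fin p)) (hconn : G.Connected)
    (Q : Matrix (Fin m ⊕ Fin p) (Fin m ⊕ Fin p) ℂ)
    (hQ : ∀ k j, k ≠ j → ¬ G.Adj k j → Q k j = 0)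
    (hsym : Q.toBlocks₁₂ = (Q.toBlocks₂₁)ᵀ)
    (hC : IsUnit Q.toBlocks₂₂) :
    ∀ r s : Fin m, r ≠ s → ¬ ReducedAdj G r s →
      (Q.toBlocks₁₁ + (Q.toBlocks₂₁)ᵀ * (-Q.toBlocks₂₂)⁻¹ * Q.toBlocks₂₁) r s = 0 :=
  schur_complement_in_reduced_class_general G Q hQ hC
end

section
/- Let G = (V,E) be a finite connected simple graph on the vertex set {1,…,n}, partitioned into V₀ = {1,…,m} (with 1 ≤ m < n) and V₁ = {m+1,…,n}. Let Q ∈ ℝ^{n×n} belong to the class A(G) and have the block form Q = [[A, Bᵀ],[B, C]] with A ∈ ℝ^{m×m} corresponding to V₀ and C ∈ ℝ^{(n−m)×(n−m)} corresponding to V₁. Assume that Q_{kj} > 0 for every edge (k,j) ∈ E with k ≠ j, and that the spectral bound of C satisfies spb(C) < 0. Then C is invertible, the Schur complement M := A + Bᵀ(−C)⁻¹B exists, and M_{rs} > 0 for every pair of distinct r,s ∈ V₀ that are adjacent in the reduced graph G₀. -/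
/-! For small `t > 0` the matrix `X = 1 + t • C` is entrywise nonnegative (`C` is Metzler) and its
eigenvalues `1 + t z`, `Re z < 0`, lie in the open unit disc. By Gelfand's formula the Neumann
series of `X` converges, so `(-C)⁻¹ = t • ∑ₖ Xᵏ` is entrywise nonnegative, and its `(i, j)` entry is
positive as soon as `i` and `j` are joined by a chain of positive entries of `C`. The entry
`M r s = A r s + ∑ B i r (-C)⁻¹ i j B j s` is then a sum of nonnegative terms, one of which is
positive: `A r s` if `r` and `s` are adjacent in `G`, and otherwise the term whose `i` and `j` are
the first and last inner vertices of a path from `r` to `s` through `V₁`. -/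

open Matrix

open Filter Topology Relation Sum
open scoped NNReal ENNReal

theorem spectrum.eventually_nnnorm_pow_le_of_spectralRadius_lt {A : Type*} [NormedRing A]
    [NormedAlgebra ℂ A] [CompleteSpace A] {a : A} {θ : ℝ≥0} (h : spectralRadius ℂ a < θ) :
    ∀ᶠ k : ℕ in atTop, ‖a ^ k‖₊ ≤ θ ^ k := by
  filter_upwards [(pow_nnnorm_pow_one_div_tendsto_nhds_spectralRadius a).eventually_lt_const h,
    eventually_ne_atTop 0] with k hk hk0
  suffices (‖a ^ k‖₊ : ℝ≥0∞) ≤ (θ : ℝ≥0∞) ^ k by exact_mod_cast this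
  calc (‖a ^ k‖₊ : ℝ≥0∞) = ((‖a ^ k‖₊ : ℝ≥0∞) ^ (1 / k : ℝ)) ^ k := by
        rw [← ENNReal.rpow_natCast, ← ENNReal.rpow_mul, one_div_mul_cancel (by exact_mod_cast hk0),
          ENNReal.rpow_one]
    _ ≤ (θ : ℝ≥0∞) ^ k := pow_le_pow_left₀ bot_le hk.le k

theorem spectrum.spectralRadius_lt_of_forall_nnnorm_lt {𝕜 A : Type*} [NontriviallyNormedField 𝕜]
    [ProperSpace 𝕜] [NormedRing A] [NormedAlgebra 𝕜 A] [CompleteSpace A] {a : A} {r : ℝ≥0}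
    (hr : 0 < r) (h : ∀ z ∈ spectrum 𝕜 a, ‖z‖₊ < r) : spectralRadius 𝕜 a < r := by
  rcases (spectrum 𝕜 a).eq_empty_or_nonempty with hσ | hσ
  · simpa [spectralRadius, hσ] using hr
  · exact spectralRadius_lt_of_forall_lt_of_nonempty hσ h

theorem spectrum.exists_eq_one_add_mul_of_mem {R A : Type*} [Field R] [Ring A] [Algebra R A]
    {a : A} {t z : R} (ht : t ≠ 0) (hz : z ∈ spectrum R (1 + t • a)) :
    ∃ w ∈ spectrum R a, z = 1 + t * w := by
  have hzw : z = t * (t⁻¹ * (z - 1)) + 1 := by field_simp; ring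
  refine ⟨t⁻¹ * (z - 1), ?_, hzw.trans (add_comm _ _)⟩
  rw [hzw, ← map_one (algebraMap R A), add_mem_add_iff] at hz
  exact (smul_mem_smul_iff (r := Units.mk0 t ht)).mp hz

theorem Complex.eventually_norm_one_add_mul_lt_one {z : ℂ} (hz : z.re < 0) :
    ∀ᶠ t : ℝ in 𝓝[>] 0, ‖1 + t * z‖ < 1 := by
  have hlim : Tendsto (fun t : ℝ => 2 * z.re + t * ‖z‖ ^ 2) (𝓝[>] 0) (𝓝 (2 * z.re)) := by
    apply tendsto_nhdsWithin_of_tendsto_nhds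
    simpa using ((continuous_id.mul continuous_const).const_add (2 * z.re)).tendsto 0
  filter_upwards [self_mem_nhdsWithin, hlim.eventually_lt_const (show 2 * z.re < 0 by linarith)]
    with t ht hneg
  have hsq : ‖1 + t * z‖ ^ 2 = 1 + t * (2 * z.re + t * ‖z‖ ^ 2) := by
    simp only [Complex.sq_norm, normSq_apply, add_re, add_im, one_re, one_im, mul_re, mul_im,
      ofReal_re, ofReal_im]
    ring
  have : ‖1 + t * z‖ ^ 2 < 1 := by rw [hsq]; nlinarith [mul_neg_of_pos_of_neg ht hneg]
  exact (sq_lt_one_iff₀ (norm_nonneg _)).mp this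

namespace Matrix

def IsMetzler {n R : Type*} [Zero R] [LE R] (C : Matrix n n R) : Prop :=
  ∀ i j, i ≠ j → 0 ≤ C i j

theorem mul_apply_nonneg {l m n R : Type*} [Fintype m] [Semiring R] [PartialOrder R]
    [IsOrderedRing R] {X : Matrix l m R} {Y : Matrix m n R} (hX : ∀ i j, 0 ≤ X i j)
    (hY : ∀ i j, 0 ≤ Y i j) (i : l) (k : n) : 0 ≤ (X * Y) i k :=
  Finset.sum_nonneg fun j _ => mul_nonneg (hX i j) (hY j k)

theorem mul_apply_pos {l m n R : Type*} [Fintype m] [Semiring R] [PartialOrder R]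
    [IsStrictOrderedRing R] {X : Matrix l m R} {Y : Matrix m n R} (hX : ∀ i j, 0 ≤ X i j)
    (hY : ∀ i j, 0 ≤ Y i j) {i : l} {j : m} {k : n} (hij : 0 < X i j) (hjk : 0 < Y j k) :
    0 < (X * Y) i k :=
  Finset.sum_pos' (fun j _ => mul_nonneg (hX i j) (hY j k)) ⟨j, Finset.mem_univ j, mul_pos hij hjk⟩

theorem transpose_mul_mul_apply_nonneg {m n R : Type*} [Fintype n] [Semiring R] [PartialOrder R]
    [IsOrderedRing R] {B : Matrix n m R} {D : Matrix n n R} (hB : ∀ i r, 0 ≤ B i r)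
    (hD : ∀ i j, 0 ≤ D i j) (r s : m) : 0 ≤ (Bᵀ * D * B) r s :=
  mul_apply_nonneg (mul_apply_nonneg (fun r i => hB i r) hD) hB r s

theorem transpose_mul_mul_apply_pos {m n R : Type*} [Fintype n] [Semiring R] [PartialOrder R]
    [IsStrictOrderedRing R] {B : Matrix n m R} {D : Matrix n n R} (hB : ∀ i r, 0 ≤ B i r)
    (hD : ∀ i j, 0 ≤ D i j) {r s : m} {i j : n} (hir : 0 < B i r) (hij : 0 < D i j)
    (hjs : 0 < B j s) : 0 < (Bᵀ * D * B) r s :=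
  mul_apply_pos (mul_apply_nonneg (fun r i => hB i r) hD) hB
    (mul_apply_pos (fun r i => hB i r) hD hir hij) hjs

variable {n : Type*} [Fintype n] [DecidableEq n]

theorem exists_pow_apply_pos_of_reflTransGen {R : Type*} [Semiring R] [PartialOrder R]
    [IsStrictOrderedRing R] {X : Matrix n n R} (hX : ∀ i j, 0 ≤ X i j) {i j : n}
    (h : ReflTransGen (fun a b => 0 < X a b) i j) : ∃ k, 0 < (X ^ k) i j := by
  induction h with
  | refl => exact ⟨0, by simp⟩
  | tail _ hbc ih =>
    obtain ⟨k, hk⟩ := ih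
    exact ⟨k + 1, pow_succ X k ▸ mul_apply_pos (pow_apply_nonneg hX k) hX hk hbc⟩

attribute [local instance] Matrix.linftyOpNormedRing Matrix.linftyOpNormedAlgebra

theorem linfty_opNNNorm_map_ofReal (X : Matrix n n ℝ) :
    ‖X.map ((↑) : ℝ → ℂ)‖₊ = ‖X‖₊ := by
  simp [linfty_opNNNorm_def]

theorem summable_pow_of_spectralRadius_map_ofReal_lt_one {X : Matrix n n ℝ}
    (h : spectralRadius ℂ (X.map ((↑) : ℝ → ℂ)) < 1) : Summable (X ^ ·) := by
  obtain ⟨θ, hρθ, hθ1⟩ := ENNReal.lt_iff_exists_nnreal_btwn.mp h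
  refine .of_norm_bounded_eventually_nat
    (summable_geometric_of_lt_one θ.2 (by exact_mod_cast hθ1)) ?_
  -- Gelfand's formula needs `ℂ`; the `ℓ∞` operator norm does not see the complexification.
  filter_upwards [spectrum.eventually_nnnorm_pow_le_of_spectralRadius_lt hρθ] with k hk
  have hpow : X.map ((↑) : ℝ → ℂ) ^ k = (X ^ k).map (↑) :=
    (map_pow (Complex.ofRealHom.mapMatrix (m := n)) X k).symm
  rw [hpow, linfty_opNNNorm_map_ofReal] at hk
  exact_mod_cast hk

section Metzler

variable {C : Matrix n n ℝ} (hC : C.IsMetzler)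
  (hspb : ∀ z ∈ spectrum ℂ (C.map ((↑) : ℝ → ℂ)), z.re < 0)
include hC hspb

theorem IsMetzler.exists_one_add_smul_nonneg_spectralRadius_lt_one :
    ∃ t : ℝ, 0 < t ∧ (∀ i j, 0 ≤ (1 + t • C) i j) ∧
      spectralRadius ℂ ((1 + t • C).map ((↑) : ℝ → ℂ)) < 1 := by
  have hspec : ∀ᶠ t : ℝ in 𝓝[>] 0, ∀ z ∈ spectrum ℂ (C.map ((↑) : ℝ → ℂ)), ‖1 + t * z‖ < 1 :=
    ((C.map _).finite_spectrum.eventually_all).2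
      fun z hz => Complex.eventually_norm_one_add_mul_lt_one (hspb z hz)
  have hdiag : ∀ᶠ t : ℝ in 𝓝[>] 0, ∀ i, 0 < 1 + t * C i i := by
    refine eventually_all.2 fun i =>
      (tendsto_nhdsWithin_of_tendsto_nhds ?_).eventually_const_lt one_pos
    simpa using ((continuous_id.mul continuous_const).const_add 1).tendsto (0 : ℝ)
  obtain ⟨t, ht, hspec, hdiag⟩ := (eventually_mem_nhdsWithin.and (hspec.and hdiag)).exists
  refine ⟨t, ht, fun i j => ?_, spectrum.spectralRadius_lt_of_forall_nnnorm_lt one_pos ?_⟩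
  · rcases eq_or_ne i j with rfl | hij
    · simpa using (hdiag i).le
    · simpa [one_apply_ne hij] using mul_nonneg ht.le (hC i j hij)
  · intro z hz
    have hmap : (1 + t • C).map ((↑) : ℝ → ℂ) = 1 + (t : ℂ) • C.map (↑) := by
      ext i j; rcases eq_or_ne i j with rfl | hij <;> simp [one_apply_ne, *]
    rw [hmap] at hz
    obtain ⟨w, hw, rfl⟩ := spectrum.exists_eq_one_add_mul_of_mem (by exact_mod_cast ht.ne') hz
    exact_mod_cast hspec w hw

theorem IsMetzler.exists_hasSum_inv_neg_apply :
    IsUnit C ∧ ∃ t : ℝ, 0 < t ∧ (∀ i j, 0 ≤ (1 + t • C) i j) ∧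
      ∀ i j, HasSum (fun k => t * ((1 + t • C) ^ k : Matrix n n ℝ) i j) ((-C)⁻¹ i j) := by
  obtain ⟨t, ht, hX, hρ⟩ := hC.exists_one_add_smul_nonneg_spectralRadius_lt_one hspb
  have hsum := summable_pow_of_spectralRadius_map_ofReal_lt_one hρ
  have hright : -C * (t • ∑' k, (1 + t • C) ^ k) = 1 := by
    have h := hsum.one_sub_mul_tsum_pow
    rwa [show 1 - (1 + t • C) = t • -C by module, smul_mul_assoc, ← mul_smul_comm] at h
  refine ⟨?_, t, ht, hX, fun i j => ?_⟩
  · simpa using ((isUnit_iff_isUnit_det _).mpr (isUnit_det_of_right_inverse hright)).neg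
  · rw [inv_eq_right_inv hright]
    simpa using Pi.hasSum.mp (Pi.hasSum.mp (hsum.hasSum.const_smul t) i) j

theorem IsMetzler.inv_neg_apply_nonneg (i j : n) : 0 ≤ (-C)⁻¹ i j := by
  obtain ⟨-, t, ht, hX, hsum⟩ := hC.exists_hasSum_inv_neg_apply hspb
  exact (hsum i j).nonneg fun k => mul_nonneg ht.le (pow_apply_nonneg hX k i j)

theorem IsMetzler.inv_neg_apply_pos_of_reflTransGen {i j : n}
    (h : ReflTransGen (fun a b => 0 < C a b) i j) : 0 < (-C)⁻¹ i j := by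
  obtain ⟨-, t, ht, hX, hsum⟩ := hC.exists_hasSum_inv_neg_apply hspb
  have hpos : ∀ a b, 0 < C a b → 0 < (1 + t • C) a b := fun a b hab => by
    rw [add_apply, smul_apply, smul_eq_mul]
    exact add_pos_of_nonneg_of_pos (by rw [one_apply]; split_ifs <;> simp) (mul_pos ht hab)
  obtain ⟨k, hk⟩ := exists_pow_apply_pos_of_reflTransGen hX (ReflTransGen.mono hpos _ _ h)
  exact (mul_pos ht hk).trans_le
    (le_hasSum (hsum i j) k fun l _ => mul_nonneg ht.le (pow_apply_nonneg hX l i j))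

end Metzler

end Matrix

theorem SimpleGraph.Walk.exists_reflTransGen_of_support_inr {α β : Type*}
    {G : SimpleGraph (α ⊕ β)} {i : β} {s : α} (w : G.Walk (inr i) (inl s))
    (hw : ∀ v ∈ w.support, v ≠ inl s → ∃ a, v = inr a) :
    ∃ j, ReflTransGen (fun a b => G.Adj (inr a) (inr b)) i j ∧ G.Adj (inr j) (inl s) := by
  generalize hu : (inr i : α ⊕ β) = u at w hw
  generalize ht : (inl s : α ⊕ β) = t at w hw
  induction w generalizing i with
  | nil => simp [← ht] at hu
  | @cons u v t h w ih =>
    subst hu ht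
    by_cases hv : v = inl s
    · subst hv
      exact ⟨i, .refl, h⟩
    · obtain ⟨a, rfl⟩ := hw v (by simp) hv
      obtain ⟨j, hij, hj⟩ := ih rfl rfl fun v hv => hw v (by simp [hv])
      exact ⟨j, .head h hij, hj⟩

theorem ConnThroughInner.adj_or_exists_reflTransGen {m p : ℕ} {G : SimpleGraph (Fin m ⊕ Fin p)}
    {r s : Fin m} (h : ConnThroughInner G r s) (hrs : r ≠ s) :
    G.Adj (inl r) (inl s) ∨ ∃ i j, G.Adj (inl r) (inr i) ∧
      ReflTransGen (fun a b => G.Adj (inr a) (inr b)) i j ∧ G.Adj (inr j) (inl s) := by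
  obtain ⟨w, hpath, hw⟩ := h
  cases w with
  | nil => exact absurd rfl hrs
  | @cons _ v _ h w =>
    by_cases hv : v = inl s
    · subst hv
      exact .inl h
    have hr : inl r ∉ w.support := ((SimpleGraph.Walk.cons_isPath_iff h w).mp hpath).2
    obtain ⟨i, rfl⟩ := hw v (by simp) (fun hvr => hr (hvr ▸ w.start_mem_support)) hv
    obtain ⟨j, hij, hj⟩ := w.exists_reflTransGen_of_support_inr fun v hv hvs =>
      hw v (by simp [hv]) (fun hvr => hr (hvr ▸ hv)) hvs
    exact .inr ⟨i, j, h, hij, hj⟩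

theorem schur_complement_positive_entries_general {m p : ℕ}
    (G : SimpleGraph (Fin m ⊕ Fin p))
    (Q : Matrix (Fin m ⊕ Fin p) (Fin m ⊕ Fin p) ℝ)
    (hQ : ∀ k j, k ≠ j → ¬ G.Adj k j → Q k j = 0)
    (hpos : ∀ k j, G.Adj k j → 0 < Q k j)
    (hspb : ∀ z ∈ spectrum ℂ ((Q.toBlocks₂₂).map Complex.ofReal), z.re < 0) :
    IsUnit Q.toBlocks₂₂ ∧
      ∀ r s : Fin m, r ≠ s → ReducedAdj G r s →
        0 < (Q.toBlocks₁₁ + (Q.toBlocks₂₁)ᵀ * (-Q.toBlocks₂₂)⁻¹ * Q.toBlocks₂₁) r s := by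
  have hQ_nonneg : ∀ k j, k ≠ j → 0 ≤ Q k j := fun k j hkj =>
    (em (G.Adj k j)).elim (fun h => (hpos k j h).le) fun h => (hQ k j hkj h).ge
  have hC : Q.toBlocks₂₂.IsMetzler := fun i j hij => hQ_nonneg _ _ (inr_injective.ne hij)
  have hB : ∀ i r, 0 ≤ Q.toBlocks₂₁ i r := fun i r => hQ_nonneg _ _ inr_ne_inl
  have hD := hC.inv_neg_apply_nonneg hspb
  refine ⟨(hC.exists_hasSum_inv_neg_apply hspb).1, fun r s hrs hred => ?_⟩
  rw [Matrix.add_apply]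
  obtain hadj | ⟨i, j, hri, hij, hjs⟩ := hred.2.elim .inl (·.adj_or_exists_reflTransGen hrs)
  · exact add_pos_of_pos_of_nonneg (hpos _ _ hadj) (transpose_mul_mul_apply_nonneg hB hD r s)
  · refine add_pos_of_nonneg_of_pos (hQ_nonneg _ _ (inl_injective.ne hrs))
      (transpose_mul_mul_apply_pos hB hD (hpos _ _ hri.symm) ?_ (hpos _ _ hjs))
    exact hC.inv_neg_apply_pos_of_reflTransGen hspb
      (ReflTransGen.mono (fun a b => hpos _ _) _ _ hij)

/-- Let `G` be a finite connected simple graph on `V₀ ⊕ V₁`, and let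
`Q ∈ ℝ^{n×n}` be in the class `A(G)` with block form `[[A, Bᵀ],[B, C]]`.  If `Q_{kj} > 0` on
all edges and the spectral bound of `C` is negative (all complex eigenvalues of `C` have
negative real part), then `C` is invertible and the Schur complement `M = A + Bᵀ(−C)⁻¹B`
satisfies `M_{rs} > 0` for all distinct `r, s ∈ V₀` adjacent in the reduced graph `G₀`. -/
theorem schur_complement_positive_entries {m p : ℕ} (hm : 1 ≤ m) (hp : 1 ≤ p)
    (G : SimpleGraph (Fin m ⊕ Fin p)) (hconn : G.Connected)
    (Q : Matrix (Fin m ⊕ Fin p) (Fin m ⊕ Fin p) ℝ)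
    (hQ : ∀ k j, k ≠ j → ¬ G.Adj k j → Q k j = 0)
    (hsym : Q.toBlocks₁₂ = (Q.toBlocks₂₁)ᵀ)
    (hpos : ∀ k j, G.Adj k j → 0 < Q k j)
    (hspb : ∀ z ∈ spectrum ℂ ((Q.toBlocks₂₂).map Complex.ofReal), z.re < 0) :
    IsUnit Q.toBlocks₂₂ ∧
      ∀ r s : Fin m, r ≠ s → ReducedAdj G r s →
        0 < (Q.toBlocks₁₁ + (Q.toBlocks₂₁)ᵀ * (-Q.toBlocks₂₂)⁻¹ * Q.toBlocks₂₁) r s :=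
  schur_complement_positive_entries_general G Q hQ hpos hspb
end

section
/- For every n ≥ 1, the set of matrices M ∈ ℝ^{n×n} for which the semigroup (e^{tM})_{t≥0} is eventually strongly positive is an open subset of ℝ^{n×n}. -/
/-!
The strongly positive matrices form an open set and `(t, N) ↦ exp (t • N)` is continuous, so if
`exp (t • M) ≫ 0` on the compact interval `[t₀, 2 t₀]`, the same holds for every `N` near `M`.
By the semigroup law `exp ((s + t) • N) = exp (s • N) * exp (t • N)` and since products of
strongly positive matrices are strongly positive, positivity on `[t₀, 2 t₀]` propagates to all
`t ≥ t₀`.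
-/

open Matrix Set Filter Topology

namespace Matrix

section StrongPositivity

variable {l m n R : Type*}

theorem pos_mul_apply_of_forall_pos [Fintype m] [Nonempty m] [Semiring R] [PartialOrder R]
    [IsStrictOrderedRing R] {A : Matrix l m R} {B : Matrix m n R}
    (hA : ∀ i j, 0 < A i j) (hB : ∀ i j, 0 < B i j) (i : l) (j : n) : 0 < (A * B) i j :=
  Finset.sum_pos (fun k _ => mul_pos (hA i k) (hB k j)) Finset.univ_nonempty

theorem isOpen_setOf_forall_pos [Finite m] [Finite n] [Zero R] [LinearOrder R] [TopologicalSpace R]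
    [OrderClosedTopology R] : IsOpen {A : Matrix m n R | ∀ i j, 0 < A i j} := by
  simp only [ofPred_forall]
  exact isOpen_iInter_of_finite fun i => isOpen_iInter_of_finite fun j =>
    isOpen_lt continuous_const ((continuous_apply j).comp (continuous_apply i))

end StrongPositivity

variable {n : Type*} [Fintype n] [DecidableEq n]

theorem exp_add_smul (A : Matrix n n ℝ) (s t : ℝ) :
    NormedSpace.exp ((s + t) • A) = NormedSpace.exp (s • A) * NormedSpace.exp (t • A) := by
  rw [add_smul]
  exact exp_add_of_commute _ _ (((Commute.refl A).smul_left s).smul_right t)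

open scoped Matrix.Norms.Operator in
theorem continuous_exp_smul :
    Continuous fun p : Matrix n n ℝ × ℝ => NormedSpace.exp (p.2 • p.1) :=
  NormedSpace.exp_continuous.comp (continuous_snd.smul continuous_fst)

end Matrix

theorem forall_ge_of_add_closed_of_forall_mem_Icc {P : ℝ → Prop} {t₀ : ℝ} (ht₀ : 0 < t₀)
    (hadd : ∀ s t, P s → P t → P (s + t)) (hIcc : ∀ t ∈ Icc t₀ (2 * t₀), P t) :
    ∀ t, t₀ ≤ t → P t := by
  have hsteps : ∀ k : ℕ, ∀ t ∈ Icc t₀ ((k + 2) * t₀), P t := by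
    intro k
    induction k with
    | zero => simpa using hIcc
    | succ k ih =>
      rintro t ⟨hlo, hhi⟩
      rcases le_or_gt t (2 * t₀) with hle | hgt
      · exact hIcc t ⟨hlo, hle⟩
      · have hrest : t - t₀ ∈ Icc t₀ ((k + 2) * t₀) := by
          push_cast at hhi
          constructor <;> linarith
        simpa using hadd t₀ (t - t₀) (hIcc t₀ ⟨le_rfl, by linarith⟩) (ih _ hrest)
  intro t ht
  obtain ⟨k, hk⟩ := exists_nat_ge (t / t₀)
  refine hsteps k t ⟨ht, ?_⟩
  rw [div_le_iff₀ ht₀] at hk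
  nlinarith

/-- For every `n ≥ 1`, the set of `M ∈ ℝ^{n×n}` generating an eventually
strongly positive semigroup `(e^{tM})_{t ≥ 0}` is open in `ℝ^{n×n}`. -/
theorem eventually_strongly_positive_isOpen (n : ℕ) (hn : 1 ≤ n) :
    IsOpen {M : Matrix (Fin n) (Fin n) ℝ |
      ∃ t₀ : ℝ, 0 < t₀ ∧ ∀ t : ℝ, t₀ ≤ t → ∀ i j, 0 < NormedSpace.exp (t • M) i j} := by
  have : Nonempty (Fin n) := Fin.pos_iff_nonempty.mp hn
  rw [isOpen_iff_mem_nhds]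
  rintro M ⟨t₀, ht₀, hM⟩
  have hnear : ∀ᶠ N : Matrix (Fin n) (Fin n) ℝ in 𝓝 M,
      ∀ t ∈ Icc t₀ (2 * t₀), ∀ i j, 0 < NormedSpace.exp (t • N) i j :=
    isCompact_Icc.eventually_forall_of_forall_eventually fun t ht =>
      (isOpen_setOf_forall_pos.preimage continuous_exp_smul).mem_nhds (hM t ht.1)
  filter_upwards [hnear] with N hN
  refine ⟨t₀, ht₀, forall_ge_of_add_closed_of_forall_mem_Icc ht₀ (fun s t hs ht => ?_) hN⟩
  rw [exp_add_smul]
  exact pos_mul_apply_of_forall_pos hs ht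
end

section
/- Let M ∈ ℂ^{d×d}. If e^{tM} is positive for all t ≥ 0 (i.e. all entries of e^{tM} are nonnegative real numbers), and if there exists t₀ > 0 such that e^{−tM} is positive for all t ≥ t₀, then e^{tM} is positive for every t ∈ ℝ. -/
/-
For `t < 0` write `t = (t - t₀) + t₀`: then `e^{tM} = e^{(t - t₀)M} e^{t₀M}`, where the first
factor is positive because `t - t₀ ≤ -t₀` and the second because `t₀ ≥ 0`, and a product of
positive matrices is positive.
-/

open Matrix

/-- A complex matrix is (entrywise) positive: all entries are nonnegative real numbers. -/
def Matrix.EntrywisePos {d : ℕ} (A : Matrix (Fin d) (Fin d) ℂ) : Prop :=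
  ∀ i j, 0 ≤ (A i j).re ∧ (A i j).im = 0

lemma Matrix.EntrywisePos.mul {d : ℕ} {A B : Matrix (Fin d) (Fin d) ℂ}
    (hA : A.EntrywisePos) (hB : B.EntrywisePos) : (A * B).EntrywisePos := by
  intro i j
  simp only [Matrix.mul_apply]
  constructor
  · rw [Complex.re_sum]
    refine Finset.sum_nonneg fun k _ => ?_
    rw [Complex.mul_re, (hA i k).2, (hB k j).2, mul_zero, sub_zero]
    exact mul_nonneg (hA i k).1 (hB k j).1
  · rw [Complex.im_sum]
    refine Finset.sum_eq_zero fun k _ => ?_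
    rw [Complex.mul_im, (hA i k).2, (hB k j).2, mul_zero, zero_mul, add_zero]

lemma Matrix.exp_add_smul_s12 {m 𝕜 : Type*} [Fintype m] [DecidableEq m] [RCLike 𝕜]
    (M : Matrix m m 𝕜) (s t : 𝕜) :
    NormedSpace.exp ((s + t) • M) = NormedSpace.exp (s • M) * NormedSpace.exp (t • M) := by
  rw [add_smul, Matrix.exp_add_of_commute _ _ (((Commute.refl M).smul_left s).smul_right t)]

/-- Let `M ∈ ℂ^{d×d}`.  If `e^{tM}` is positive for all `t ≥ 0` and there is
`t₀ > 0` such that `e^{−tM}` is positive for all `t ≥ t₀`, then `e^{tM}` is positive for every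
`t ∈ ℝ`. -/
theorem exp_positive_group_of_positive_semigroups {d : ℕ} (M : Matrix (Fin d) (Fin d) ℂ)
    (hpos : ∀ t : ℝ, 0 ≤ t → Matrix.EntrywisePos (NormedSpace.exp ((t : ℂ) • M)))
    (hev : ∃ t₀ : ℝ, 0 < t₀ ∧ ∀ t : ℝ, t₀ ≤ t →
      Matrix.EntrywisePos (NormedSpace.exp ((t : ℂ) • (-M)))) :
    ∀ t : ℝ, Matrix.EntrywisePos (NormedSpace.exp ((t : ℂ) • M)) := by
  obtain ⟨t₀, ht₀, hneg⟩ := hev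
  have hpast : ∀ s : ℝ, s ≤ -t₀ → (NormedSpace.exp ((s : ℂ) • M)).EntrywisePos := fun s hs => by
    simpa only [smul_neg, ← neg_smul, Complex.ofReal_neg, neg_neg] using hneg (-s) (by linarith)
  intro t
  rcases le_or_gt 0 t with ht | ht
  · exact hpos t ht
  · have hsplit : (t : ℂ) = ((t - t₀ : ℝ) : ℂ) + (t₀ : ℂ) := by push_cast; ring
    rw [hsplit, Matrix.exp_add_smul_s12]
    exact (hpast _ (by linarith)).mul (hpos t₀ ht₀.le)
end

section
/- Let M ∈ ℂ^{d×d}. If e^{tM} is positive for every t ∈ ℝ (i.e. all entries of e^{tM} are nonnegative real numbers for every real t), then M is a diagonal matrix all of whose diagonal entries are real. -/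
/-!
The entries of `t ↦ exp (t M)` are differentiable with derivative `M i j` at `t = 0`. An entry
that is real for all `t` has real derivative, and an off-diagonal entry is nonnegative and
vanishes at `t = 0` (where `exp (0 M) = 1`), so `t = 0` is a local minimum of its real part and
its derivative vanishes there.
-/

open Matrix Filter Topology

theorem Matrix.hasDerivAt_exp_ofReal_smul_apply_zero {ι : Type*} [Fintype ι] [DecidableEq ι]
    (M : Matrix ι ι ℂ) (i j : ι) :
    HasDerivAt (fun t : ℝ => NormedSpace.exp ((t : ℂ) • M) i j) (M i j) 0 := by
  -- `exp` depends only on the topology, so any matrix norm may be chosen for the calculus.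
  let _ := Matrix.linftyOpNormedRing (n := ι) (α := ℂ)
  let _ := Matrix.linftyOpNormedAlgebra (n := ι) (R := ℂ) (α := ℂ)
  have hexp : HasDerivAt (fun t : ℝ => NormedSpace.exp ((t : ℂ) • M)) M 0 := by
    have h := (hasDerivAt_exp_smul_const M ((0 : ℝ) : ℂ)).scomp_of_eq 0
      (Complex.ofRealCLM.hasDerivAt (x := 0)) rfl
    rwa [Complex.ofReal_zero, zero_smul, NormedSpace.exp_zero, one_mul, Complex.ofRealCLM_apply,
      Complex.ofReal_one, one_smul] at h
  exact (entryLinearMap ℝ ℂ i j).toContinuousLinearMap.hasFDerivAt.comp_hasDerivAt 0 hexp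

theorem HasDerivAt.im_eq_zero_of_eventually_im_eq_zero {f : ℝ → ℂ} {z : ℂ} {x : ℝ}
    (hf : HasDerivAt f z x) (h : ∀ᶠ t in 𝓝 x, (f t).im = 0) : z.im = 0 :=
  (Complex.imCLM.hasFDerivAt.comp_hasDerivAt x hf).unique
    ((hasDerivAt_const x 0).congr_of_eventuallyEq h)

theorem HasDerivAt.re_eq_zero_of_isLocalMin_re {f : ℝ → ℂ} {z : ℂ} {x : ℝ}
    (hf : HasDerivAt f z x) (h : IsLocalMin (fun t => (f t).re) x) : z.re = 0 :=
  h.hasDerivAt_eq_zero (Complex.reCLM.hasFDerivAt.comp_hasDerivAt x hf)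

/-- Let `M ∈ ℂ^{d×d}`.  If `e^{tM}` is positive for every `t ∈ ℝ`, then `M`
is a diagonal matrix all of whose diagonal entries are real. -/
theorem diagonal_of_exp_positive_group {d : ℕ} (M : Matrix (Fin d) (Fin d) ℂ)
    (hpos : ∀ t : ℝ, Matrix.EntrywisePos (NormedSpace.exp ((t : ℂ) • M))) :
    (∀ i j, i ≠ j → M i j = 0) ∧ (∀ i, (M i i).im = 0) := by
  have hderiv := M.hasDerivAt_exp_ofReal_smul_apply_zero
  have hreal : ∀ i j, (M i j).im = 0 := fun i j =>
    (hderiv i j).im_eq_zero_of_eventually_im_eq_zero (.of_forall fun t => (hpos t i j).2)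
  refine ⟨fun i j hij => Complex.ext ?_ (hreal i j), fun i => hreal i i⟩
  have hmin : IsLocalMin (fun t : ℝ => (NormedSpace.exp ((t : ℂ) • M) i j).re) 0 :=
    .of_forall fun t => by simpa [one_apply_ne hij] using (hpos t i j).1
  exact (hderiv i j).re_eq_zero_of_isLocalMin_re hmin
end

section
/- Let G be a finite connected simple graph with vertex set V = {v_1,…,v_n} (n ≥ 2), edge set E, and edge lengths L_{kj} ∈ (0,∞). If λ ∈ ℝ satisfies λ < min_{(k,j)∈E} (π/L_{kj})², then the matrix D_{λ,V} is defined (for 0 < λ one has √λ·L_{kj} ∈ (0,π), so sin(√λ·L_{kj}) ≠ 0 for every edge) and the semigroup (e^{−t·D_{λ,V}})_{t≥0} is strongly positive. -/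
/-!
Off the diagonal, `-D_{λ,V}` carries the entries `β_{kj}(λ)`, which are positive on the edges
exactly because `√λ · L_{kj} < π`, and zero elsewhere. Adding `c • 1` for large `c` makes
`-t D_{λ,V} + c • 1` entrywise nonnegative and only multiplies its exponential by `e^c`. For an
entrywise nonnegative `B`, the exponential series dominates each term `B^m / m!`, and the
`(i, j)` entry of `B^m` is positive as soon as `m` is the length of a walk from `i` to `j`
along edges where `B` is positive; connectedness provides such a walk.
-/

open Matrix

/-- `β_{kj}(λ)` for an edge of length `L`. -/
noncomputable def betaFn (L lam : ℝ) : ℝ :=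
  if 0 < lam then Real.sqrt lam / Real.sin (Real.sqrt lam * L)
  else if lam = 0 then 1 / L
  else Real.sqrt (-lam) / Real.sinh (Real.sqrt (-lam) * L)

/-- `α_{kj}(λ)` for an edge of length `L`. -/
noncomputable def alphaFn (L lam : ℝ) : ℝ :=
  if 0 < lam then Real.sqrt lam * Real.cos (Real.sqrt lam * L) / Real.sin (Real.sqrt lam * L)
  else if lam = 0 then 1 / L
  else Real.sqrt (-lam) * Real.cosh (Real.sqrt (-lam) * L) / Real.sinh (Real.sqrt (-lam) * L)

/-- The Dirichlet-to-Neumann matrix `D_{λ,V}` of a quantum graph with adjacency `G` and edge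
lengths `L`. -/
noncomputable def DtN {V : Type*} [Fintype V] [DecidableEq V]
    (G : SimpleGraph V) [DecidableRel G.Adj] (L : V → V → ℝ) (lam : ℝ) :
    Matrix V V ℝ := fun k j =>
  if k = j then ∑ l, (if G.Adj k l then alphaFn (L k l) lam else 0)
  else if G.Adj k j then -betaFn (L k j) lam else 0

open NormedSpace

namespace Matrix

variable {V : Type*} [Fintype V] [DecidableEq V]

theorem pow_apply_pos_of_walk {α : Type*} [Semiring α] [PartialOrder α] [IsStrictOrderedRing α]
    {G : SimpleGraph V} {B : Matrix V V α} (hB : ∀ i j, 0 ≤ B i j)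
    (hadj : ∀ i j, G.Adj i j → 0 < B i j) {i j : V} (p : G.Walk i j) :
    0 < (B ^ p.length) i j := by
  induction p with
  | nil => simp
  | @cons a b c hab p ih =>
    rw [SimpleGraph.Walk.length_cons, pow_succ', mul_apply]
    exact Finset.sum_pos' (fun l _ => mul_nonneg (hB a l) (pow_apply_nonneg hB _ l c))
      ⟨b, Finset.mem_univ b, mul_pos (hadj a b hab) ih⟩

theorem exp_apply_pos_of_nonneg {G : SimpleGraph V} (hG : G.Connected) {B : Matrix V V ℝ}
    (hB : ∀ i j, 0 ≤ B i j) (hadj : ∀ i j, G.Adj i j → 0 < B i j) (i j : V) :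
    0 < exp B i j := by
  -- `exp` does not depend on a norm; one is only needed to sum its series.
  open scoped Norms.Operator in
  have hsum : HasSum (fun m : ℕ => ((m.factorial : ℝ)⁻¹ • B ^ m) i j) (exp B i j) :=
    Pi.hasSum.1 (Pi.hasSum.1 (exp_series_hasSum_exp' (𝕂 := ℝ) B) i) j
  obtain ⟨p⟩ := hG.preconnected i j
  have hterm_nonneg (m : ℕ) : 0 ≤ ((m.factorial : ℝ)⁻¹ • B ^ m) i j :=
    mul_nonneg (by positivity) (pow_apply_nonneg hB m i j)
  calc 0 < ((p.length.factorial : ℝ)⁻¹ • B ^ p.length) i j :=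
        mul_pos (by positivity) (pow_apply_pos_of_walk hB hadj p)
    _ ≤ exp B i j := le_hasSum hsum _ fun m _ => hterm_nonneg m

theorem exp_add_algebraMap (M : Matrix V V ℝ) (c : ℝ) :
    exp (M + algebraMap ℝ _ c) = Real.exp c • exp M := by
  open scoped Norms.Operator in
  have hscalar : exp (algebraMap ℝ (Matrix V V ℝ) c) = algebraMap ℝ _ (Real.exp c) := by
    rw [Real.exp_eq_exp_ℝ]
    exact (algebraMap_exp_comm c).symm
  rw [exp_add_of_commute _ _ (Algebra.commute_algebraMap_right _ _), hscalar,
    ← Algebra.commutes, ← Algebra.smul_def]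

theorem exp_apply_pos_of_offDiag_nonneg {G : SimpleGraph V} (hG : G.Connected)
    {M : Matrix V V ℝ} (hM : ∀ i j, i ≠ j → 0 ≤ M i j) (hadj : ∀ i j, G.Adj i j → 0 < M i j)
    (i j : V) : 0 < exp M i j := by
  set c : ℝ := ∑ k, |M k k|
  have hshift_nonneg : ∀ k l, 0 ≤ (M + algebraMap ℝ _ c) k l := by
    intro k l
    rcases eq_or_ne k l with rfl | hkl
    · have hdiag_le : |M k k| ≤ c :=
        Finset.single_le_sum (fun k _ => abs_nonneg (M k k)) (Finset.mem_univ k)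
      simp only [add_apply, algebraMap_matrix_apply, if_true, Algebra.algebraMap_self,
        RingHom.id_apply]
      linarith [neg_abs_le (M k k)]
    · simpa [algebraMap_eq_diagonal, hkl] using hM k l hkl
  have hshift_adj : ∀ k l, G.Adj k l → 0 < (M + algebraMap ℝ _ c) k l := by
    intro k l hkl
    simpa [algebraMap_eq_diagonal, hkl.ne] using hadj k l hkl
  have hshifted := exp_apply_pos_of_nonneg hG hshift_nonneg hshift_adj i j
  rw [exp_add_algebraMap, smul_apply, smul_eq_mul] at hshifted
  exact pos_of_mul_pos_right hshifted (Real.exp_pos c).le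

end Matrix

open Real

theorem sin_sqrt_mul_pos {L lam : ℝ} (hL : 0 < L) (hlam : 0 < lam) (hlt : lam < (π / L) ^ 2) :
    0 < sin (√lam * L) := by
  have hsqrt : √lam < π / L := (sqrt_lt' (div_pos pi_pos hL)).2 hlt
  exact sin_pos_of_pos_of_lt_pi (mul_pos (sqrt_pos.2 hlam) hL) ((lt_div_iff₀ hL).1 hsqrt)

theorem betaFn_pos {L lam : ℝ} (hL : 0 < L) (hlt : lam < (π / L) ^ 2) : 0 < betaFn L lam := by
  unfold betaFn
  rcases lt_trichotomy lam 0 with hneg | rfl | hpos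
  · rw [if_neg hneg.not_gt, if_neg hneg.ne]
    have hsqrt : 0 < √(-lam) := sqrt_pos.2 (neg_pos.2 hneg)
    exact div_pos hsqrt (sinh_pos_iff.2 (mul_pos hsqrt hL))
  · simpa using hL
  · rw [if_pos hpos]
    exact div_pos (sqrt_pos.2 hpos) (sin_sqrt_mul_pos hL hpos hlt)

theorem DtN_apply_of_ne {V : Type*} [Fintype V] [DecidableEq V] (G : SimpleGraph V)
    [DecidableRel G.Adj] (L : V → V → ℝ) (lam : ℝ) {k j : V} (hkj : k ≠ j) :
    DtN G L lam k j = if G.Adj k j then -betaFn (L k j) lam else 0 :=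
  if_neg hkj

theorem dtn_semigroup_strongly_positive_below_first_eigenvalue_general {n : ℕ}
    (G : SimpleGraph (Fin n)) [DecidableRel G.Adj] (hconn : G.Connected)
    (L : Fin n → Fin n → ℝ)
    (hLpos : ∀ k j, G.Adj k j → 0 < L k j)
    (lam : ℝ) (hlam : ∀ k j, G.Adj k j → lam < (Real.pi / L k j) ^ 2) :
    (0 < lam → ∀ k j, G.Adj k j → Real.sin (Real.sqrt lam * L k j) ≠ 0) ∧
      ∀ t : ℝ, 0 < t → ∀ i j, 0 < NormedSpace.exp (t • (-(DtN G L lam))) i j := by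
  refine ⟨fun hpos k j hkj => (sin_sqrt_mul_pos (hLpos k j hkj) hpos (hlam k j hkj)).ne', ?_⟩
  intro t ht
  have hbeta : ∀ k j, G.Adj k j → 0 < betaFn (L k j) lam :=
    fun k j hkj => betaFn_pos (hLpos k j hkj) (hlam k j hkj)
  refine exp_apply_pos_of_offDiag_nonneg hconn (fun k j hkj => ?_) (fun k j hkj => ?_)
  · rw [Matrix.smul_apply, Matrix.neg_apply, DtN_apply_of_ne G L lam hkj, smul_eq_mul]
    split_ifs with hadj
    · exact mul_nonneg ht.le (by simpa using (hbeta k j hadj).le)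
    · simp
  · rw [Matrix.smul_apply, Matrix.neg_apply, DtN_apply_of_ne G L lam hkj.ne, if_pos hkj,
      neg_neg, smul_eq_mul]
    exact mul_pos ht (hbeta k j hkj)

/-- If `λ < min_{(k,j)∈E} (π/L_{kj})²`, then `D_{λ,V}` is defined (for
`0 < λ` one has `sin(√λ·L_{kj}) ≠ 0` on every edge) and the semigroup `(e^{−tD_{λ,V}})_{t≥0}`
is strongly positive. -/
theorem dtn_semigroup_strongly_positive_below_first_eigenvalue {n : ℕ} (hn : 2 ≤ n)
    (G : SimpleGraph (Fin n)) [DecidableRel G.Adj] (hconn : G.Connected)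
    (L : Fin n → Fin n → ℝ) (hsymm : ∀ k j, L k j = L j k)
    (hLpos : ∀ k j, G.Adj k j → 0 < L k j)
    (lam : ℝ) (hlam : ∀ k j, G.Adj k j → lam < (Real.pi / L k j) ^ 2) :
    (0 < lam → ∀ k j, G.Adj k j → Real.sin (Real.sqrt lam * L k j) ≠ 0) ∧
      ∀ t : ℝ, 0 < t → ∀ i j, 0 < NormedSpace.exp (t • (-(DtN G L lam))) i j :=
  dtn_semigroup_strongly_positive_below_first_eigenvalue_general G hconn L hLpos lam hlam
end
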